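/- Let A_1,...,A_M be pairwise independent events in a probability space. Then (1/2)·min{1, Σ_{i=1}^M P(A_i)} ≤ P(⋃_{i=1}^M A_i) ≤ min{1, Σ_{i=1}^M P(A_i)}. -/

import Mathlib

open MeasureTheory ProbabilityTheory

/-! By pairwise independence a new event `A a` meets a union of events of total probability `t`
in probability at most `P(A a) · t`, so it adds at least `P(A a) - P(A a) · t` to the probability
of that union. Adding the events one by one gives `P(⋃ A i) ≥ S - S² / 2` for `S = Σ P(A i)`,
which is `≥ S / 2` when `S ≤ 1`. When `S > 1`, stop at the first event `A j` that pushes the total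
`t` of the earlier ones past `1`: with `p = P(A j)`, the union up to `A j` has probability at least
`p + t - t² / 2 - p t = 1 / 2 + (1 - t)(t + 2p - 1) / 2 ≥ 1 / 2`. -/

theorem Finset.exists_sum_le_lt_add_sum {ι α : Type*} [DecidableEq ι] [AddCommMonoid α]
    [LinearOrder α] (f : ι → α) {c : α} (hc : 0 ≤ c) {u : Finset ι}
    (hu : c < ∑ i ∈ u, f i) :
    ∃ s ⊆ u, ∃ j ∈ u, j ∉ s ∧ ∑ i ∈ s, f i ≤ c ∧ c < f j + ∑ i ∈ s, f i := by
  induction u using Finset.induction_on with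
  | empty => exact absurd hu (by simpa using hc)
  | @insert a u ha ih =>
    rw [Finset.sum_insert ha] at hu
    by_cases hcu : c < ∑ i ∈ u, f i
    · obtain ⟨s, hsu, j, hju, hjs, hsc, hcs⟩ := ih hcu
      exact ⟨s, hsu.trans (Finset.subset_insert a u), j, Finset.mem_insert_of_mem hju, hjs,
        hsc, hcs⟩
    · exact ⟨u, Finset.subset_insert a u, a, Finset.mem_insert_self a u, ha, not_lt.mp hcu, hu⟩

namespace ProbabilityTheory

variable {Ω ι : Type*} [MeasurableSpace Ω] {μ : Measure Ω}

theorem IndepSet.measureReal_inter_eq_mul {s t : Set Ω} (h : IndepSet s t μ) :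
    μ.real (s ∩ t) = μ.real s * μ.real t := by
  simp only [measureReal_def, h.measure_inter_eq_mul, ENNReal.toReal_mul]

variable [IsFiniteMeasure μ] {A : ι → Set Ω} [DecidableEq ι]

theorem measureReal_add_measureReal_biUnion_sub_mul_sum_le (hA : ∀ i, MeasurableSet (A i))
    (hindep : Pairwise fun i j => IndepSet (A i) (A j) μ) {a : ι} {s : Finset ι} (ha : a ∉ s) :
    μ.real (A a) + μ.real (⋃ i ∈ s, A i) - μ.real (A a) * ∑ i ∈ s, μ.real (A i)
      ≤ μ.real (⋃ i ∈ insert a s, A i) := by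
  have hunion := measureReal_union_add_inter (μ := μ) (s := A a)
    (s.measurableSet_biUnion fun i _ => hA i) (measure_ne_top _ _) (measure_ne_top _ _)
  have hinter : μ.real (A a ∩ ⋃ i ∈ s, A i) ≤ μ.real (A a) * ∑ i ∈ s, μ.real (A i) :=
    calc μ.real (A a ∩ ⋃ i ∈ s, A i)
        ≤ ∑ i ∈ s, μ.real (A a ∩ A i) := by
          rw [Set.inter_iUnion₂]; exact measureReal_biUnion_finset_le s _
      _ = μ.real (A a) * ∑ i ∈ s, μ.real (A i) := by
          rw [Finset.mul_sum]
          exact Finset.sum_congr rfl fun i hi =>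
            (hindep (ne_of_mem_of_not_mem hi ha).symm).measureReal_inter_eq_mul
  rw [Finset.set_biUnion_insert]
  linarith

theorem sum_measureReal_sub_sq_div_two_le_measureReal_biUnion (hA : ∀ i, MeasurableSet (A i))
    (hindep : Pairwise fun i j => IndepSet (A i) (A j) μ) (s : Finset ι) :
    ∑ i ∈ s, μ.real (A i) - (∑ i ∈ s, μ.real (A i)) ^ 2 / 2 ≤ μ.real (⋃ i ∈ s, A i) := by
  induction s using Finset.induction_on with
  | empty => simp
  | @insert a s ha ih =>
    have hstep := measureReal_add_measureReal_biUnion_sub_mul_sum_le hA hindep ha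
    rw [Finset.sum_insert ha]
    nlinarith [sq_nonneg (μ.real (A a))]

theorem min_one_sum_measureReal_le_two_mul_measureReal_iUnion [Fintype ι]
    (hA : ∀ i, MeasurableSet (A i)) (hindep : Pairwise fun i j => IndepSet (A i) (A j) μ) :
    min 1 (∑ i, μ.real (A i)) ≤ 2 * μ.real (⋃ i, A i) := by
  rcases le_or_gt (∑ i, μ.real (A i)) 1 with hS | hS
  · have hlow :=
      sum_measureReal_sub_sq_div_two_le_measureReal_biUnion (μ := μ) hA hindep Finset.univ
    have hS0 : 0 ≤ ∑ i, μ.real (A i) := Finset.sum_nonneg fun i _ => measureReal_nonneg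
    simp only [Finset.mem_univ, Set.iUnion_true] at hlow
    rw [min_eq_right hS]
    nlinarith
  · obtain ⟨s, -, j, -, hjs, hsle, hslt⟩ :=
      Finset.exists_sum_le_lt_add_sum (fun i => μ.real (A i)) zero_le_one hS
    have hstep := measureReal_add_measureReal_biUnion_sub_mul_sum_le hA hindep hjs
    have hlow := sum_measureReal_sub_sq_div_two_le_measureReal_biUnion hA hindep s
    have hmono : μ.real (⋃ i ∈ insert j s, A i) ≤ μ.real (⋃ i, A i) :=
      measureReal_mono (Set.iUnion₂_subset fun i _ => Set.subset_iUnion A i)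
    set p := μ.real (A j)
    set t := ∑ i ∈ s, μ.real (A i)
    have hp : 0 ≤ p := measureReal_nonneg
    have hkey : 0 ≤ (1 - t) * (t + 2 * p - 1) := mul_nonneg (by linarith) (by linarith)
    rw [min_eq_left hS.le]
    nlinarith

end ProbabilityTheory

/-- Truncated union bound (Shulman): for pairwise independent events `A 1, ..., A M`,
`(1/2) min{1, Σ P(A i)} ≤ P(⋃ A i) ≤ min{1, Σ P(A i)}`. -/
theorem stmt_1 {Ω : Type*} [MeasurableSpace Ω] (μ : Measure Ω) [IsProbabilityMeasure μ]
    (M : ℕ) (A : Fin M → Set Ω) (hA : ∀ i, MeasurableSet (A i))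
    (hindep : ∀ i j, i ≠ j → μ (A i ∩ A j) = μ (A i) * μ (A j)) :
    (1 / 2) * min 1 (∑ i, μ (A i)) ≤ μ (⋃ i, A i) ∧
      μ (⋃ i, A i) ≤ min 1 (∑ i, μ (A i)) := by
  refine ⟨?_, le_min prob_le_one (measure_iUnion_fintype_le μ A)⟩
  have hindep' : Pairwise fun i j => IndepSet (A i) (A j) μ := fun i j hij =>
    (indepSet_iff_measure_inter_eq_mul (hA i) (hA j) μ).2 (hindep i j hij)
  have hlow := ENNReal.ofReal_le_ofReal
    (min_one_sum_measureReal_le_two_mul_measureReal_iUnion hA hindep')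
  rw [ENNReal.ofReal_min, ENNReal.ofReal_one, ENNReal.ofReal_sum_of_nonneg
    (fun i _ => measureReal_nonneg), ENNReal.ofReal_mul zero_le_two] at hlow
  simp only [measureReal_def, ENNReal.ofReal_toReal (measure_ne_top μ _),
    ENNReal.ofReal_ofNat] at hlow
  rw [one_div, ← ENNReal.div_eq_inv_mul]
  exact ENNReal.div_le_of_le_mul' hlow
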